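/- arXiv:1910.04672 — 4 statements merged into one kernel-verified Lean document; each statement's English description precedes it below -/
import Mathlib

section
/- With the latent-variable setup below, the integrated product of the subposteriors can be written as a latent-variable expectation: ∫_Θ ∏_{s=1}^S q_s(θ) dμ(θ) = ∫_{Z_1×⋯×Z_S} ( ∫_Θ ∏_{s=1}^S q_s^{z_s}(θ) dμ(θ) ) ∏_{s=1}^S r_s(z_s) d(ν_1⊗⋯⊗ν_S)(z_1,…,z_S) (Proposition 2: the subposterior integral for conditionally conjugate models equals the expectation, under the product of the latent subposteriors, of the integrated product of the conditional subposteriors). -/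
open MeasureTheory ENNReal

/-!
Write each likelihood as a mixture, `L_s(θ) = ∫ k_s(θ, z) dν_s(z)`. Then the product of the
subposteriors is an integral over the latent product space, `∏ q_s(θ) = ∫ ∏ k_s(θ, z_s) π̃(θ) / c_s`,
and Tonelli lets us integrate out `θ` first. For almost every `z` each factor splits as
`k_s(θ, z_s) π̃(θ) / c_s = q_s^{z_s}(θ) · r_s(z_s)`, since the normalizer `d_s(z_s)` is nonzero and
finite and cancels.
-/

protected theorem ENNReal.div_mul_div_cancel {a b c : ℝ≥0∞} (hb : b ≠ 0) (hb' : b ≠ ∞) :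
    a / b * (b / c) = a / c := by
  rw [div_eq_mul_inv, div_eq_mul_inv, div_eq_mul_inv, mul_assoc, ← mul_assoc b⁻¹,
    ENNReal.inv_mul_cancel hb hb', one_mul]

namespace MeasureTheory

theorem lintegral_fin_nat_prod_eq_prod {n : ℕ} {E : Fin n → Type*}
    {mE : ∀ i, MeasurableSpace (E i)} {μ : (i : Fin n) → Measure (E i)} [∀ i, SigmaFinite (μ i)]
    {f : (i : Fin n) → E i → ℝ≥0∞} (hf : ∀ i, Measurable (f i)) :
    ∫⁻ x : (i : Fin n) → E i, ∏ i, f i (x i) ∂(Measure.pi μ) = ∏ i, ∫⁻ x, f i x ∂(μ i) := by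
  induction n with
  | zero => simp
  | succ n ih =>
    let σ : Fin n → Fin (n + 1) := (0 : Fin (n + 1)).succAbove
    have hrest : Measurable fun y : (j : Fin n) → E (σ j) ↦ ∏ j, f (σ j) (y j) :=
      Finset.measurable_prod _ fun j _ ↦ (hf (σ j)).comp (measurable_pi_apply j)
    calc
      _ = ∫⁻ x, f 0 (x 0) * ∏ j, f (σ j) (x (σ j)) ∂(Measure.pi μ) := by
        simp_rw [Fin.prod_univ_succAbove _ 0]; rfl
      _ = ∫⁻ y : E 0 × ((j : Fin n) → E (σ j)), f 0 y.1 * ∏ j, f (σ j) (y.2 j)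
            ∂((μ 0).prod (Measure.pi fun j ↦ μ (σ j))) :=
        (measurePreserving_piFinSuccAbove μ 0).lintegral_comp
          (((hf 0).comp measurable_fst).mul (hrest.comp measurable_snd))
      _ = (∫⁻ x, f 0 x ∂μ 0) * ∏ j, ∫⁻ x, f (σ j) x ∂(μ (σ j)) := by
        rw [lintegral_prod_mul (hf 0).aemeasurable hrest.aemeasurable, ih fun j ↦ hf (σ j)]
      _ = ∏ i, ∫⁻ x, f i x ∂(μ i) := (Fin.prod_univ_succAbove (fun i ↦ ∫⁻ x, f i x ∂(μ i)) 0).symm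

theorem lintegral_prod_lintegral_eq_lintegral_pi {n : ℕ} {Θ : Type*} [MeasurableSpace Θ]
    {μ : Measure Θ} [SFinite μ] {Z : Fin n → Type*} [∀ s, MeasurableSpace (Z s)]
    {ν : ∀ s, Measure (Z s)} [∀ s, SigmaFinite (ν s)] {g : ∀ s, Θ → Z s → ℝ≥0∞}
    (hg : ∀ s, Measurable (Function.uncurry (g s))) :
    ∫⁻ θ, ∏ s, ∫⁻ z, g s θ z ∂ν s ∂μ = ∫⁻ z, ∫⁻ θ, ∏ s, g s θ (z s) ∂μ ∂Measure.pi ν := by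
  have hg_joint : Measurable (Function.uncurry fun θ (z : ∀ s, Z s) ↦ ∏ s, g s θ (z s)) :=
    Finset.measurable_prod _ fun s _ ↦
      (hg s).comp (measurable_fst.prodMk ((measurable_pi_apply s).comp measurable_snd))
  calc
    _ = ∫⁻ θ, ∫⁻ z, ∏ s, g s θ (z s) ∂Measure.pi ν ∂μ := by
      refine lintegral_congr fun θ ↦ (lintegral_fin_nat_prod_eq_prod fun s ↦ ?_).symm
      exact (hg s).comp measurable_prodMk_left
    _ = _ := lintegral_lintegral_swap hg_joint.aemeasurable

end MeasureTheory

theorem subposterior_integral_latent_general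
    {Θ : Type*} [MeasurableSpace Θ] (μ : Measure Θ) [SigmaFinite μ]
    (S : ℕ)
    (π : Θ → ℝ≥0∞) (hπ : Measurable π)
    (L : Fin S → Θ → ℝ≥0∞)
    (α : ℝ≥0∞)
    (πsub : Θ → ℝ≥0∞) (hπsub : ∀ θ, πsub θ = π θ ^ (1 / (S : ℝ)) / α)
    (c : Fin S → ℝ≥0∞)
    (hc0 : ∀ s, c s ≠ 0)
    (q : Fin S → Θ → ℝ≥0∞) (hq : ∀ s θ, q s θ = L s θ * πsub θ / c s)
    (Z : Fin S → Type*) [∀ s, MeasurableSpace (Z s)]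
    (ν : ∀ s, Measure (Z s)) [∀ s, SigmaFinite (ν s)]
    (k : ∀ s, Θ → Z s → ℝ≥0∞) (hk : ∀ s, Measurable (Function.uncurry (k s)))
    (hLk : ∀ s θ, L s θ = ∫⁻ z, k s θ z ∂ν s)
    (d : ∀ s, Z s → ℝ≥0∞)
    (hdae : ∀ s, ∀ᵐ z ∂ν s, d s z ≠ 0 ∧ d s z ≠ ⊤)
    (qz : ∀ s, Z s → Θ → ℝ≥0∞)
    (hqz : ∀ s z θ, qz s z θ =
      if d s z = 0 ∨ d s z = ⊤ then 0 else k s θ z * πsub θ / d s z)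
    (r : ∀ s, Z s → ℝ≥0∞) (hr : ∀ s z, r s z = d s z / c s) :
    ∫⁻ θ, ∏ s, q s θ ∂μ =
      ∫⁻ z : ∀ s, Z s, (∫⁻ θ, ∏ s, qz s (z s) θ ∂μ) * ∏ s, r s (z s) ∂Measure.pi ν := by
  have hπsub_meas : Measurable πsub := by
    rw [funext hπsub]
    exact (hπ.pow_const _).div_const α
  set f : ∀ s, Θ → Z s → ℝ≥0∞ := fun s θ z ↦ k s θ z * πsub θ / c s
  have hf : ∀ s, Measurable (Function.uncurry (f s)) := fun s ↦
    ((hk s).mul (hπsub_meas.comp measurable_fst)).div_const _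
  have hq_mixture : ∀ s θ, q s θ = ∫⁻ z, f s θ z ∂ν s := fun s θ ↦ by
    simp only [f, hq, hLk, div_eq_mul_inv, mul_assoc]
    exact (lintegral_mul_const _ ((hk s).comp measurable_prodMk_left)).symm
  have hf_split : ∀ s z θ, d s z ≠ 0 → d s z ≠ ⊤ → f s θ z = qz s z θ * r s z :=
    fun s z θ h0 htop ↦ by
      rw [hqz, if_neg (not_or.2 ⟨h0, htop⟩), hr, ENNReal.div_mul_div_cancel h0 htop]
  have hd_ae : ∀ᵐ z ∂Measure.pi ν, ∀ s, d s (z s) ≠ 0 ∧ d s (z s) ≠ ⊤ :=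
    ae_all_iff.2 fun s ↦ Measure.tendsto_eval_ae_ae.eventually (hdae s)
  calc
    _ = ∫⁻ θ, ∏ s, ∫⁻ z, f s θ z ∂ν s ∂μ := by simp_rw [hq_mixture]
    _ = ∫⁻ z, ∫⁻ θ, ∏ s, f s θ (z s) ∂μ ∂Measure.pi ν :=
      lintegral_prod_lintegral_eq_lintegral_pi hf
    _ = _ := by
      refine lintegral_congr_ae (hd_ae.mono fun z hz ↦ ?_)
      have hr_ne_top : ∏ s, r s (z s) ≠ ⊤ :=
        ENNReal.prod_ne_top fun s _ ↦ hr s (z s) ▸ ENNReal.div_ne_top (hz s).2 (hc0 s)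
      beta_reduce
      rw [← lintegral_mul_const' _ _ hr_ne_top]
      simp_rw [← Finset.prod_mul_distrib]
      exact lintegral_congr fun θ ↦
        Finset.prod_congr rfl fun s _ ↦ hf_split s (z s) θ (hz s).1 (hz s).2

/-- Proposition 2: the subposterior integral for conditionally conjugate models equals
the expectation, under the product of the latent subposteriors, of the integrated
product of the conditional subposteriors. -/
theorem subposterior_integral_latent
    {Θ : Type*} [MeasurableSpace Θ] (μ : Measure Θ) [SigmaFinite μ]
    (S : ℕ) (hS : 1 ≤ S)
    (π : Θ → ℝ≥0∞) (hπ : Measurable π) (hπ1 : ∫⁻ θ, π θ ∂μ = 1)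
    (L : Fin S → Θ → ℝ≥0∞) (hL : ∀ s, Measurable (L s))
    (α : ℝ≥0∞) (hα : α = ∫⁻ θ, π θ ^ (1 / (S : ℝ)) ∂μ)
    (hα0 : α ≠ 0) (hαtop : α ≠ ⊤)
    (πsub : Θ → ℝ≥0∞) (hπsub : ∀ θ, πsub θ = π θ ^ (1 / (S : ℝ)) / α)
    (c : Fin S → ℝ≥0∞) (hc : ∀ s, c s = ∫⁻ θ, L s θ * πsub θ ∂μ)
    (hc0 : ∀ s, c s ≠ 0) (hctop : ∀ s, c s ≠ ⊤)
    (q : Fin S → Θ → ℝ≥0∞) (hq : ∀ s θ, q s θ = L s θ * πsub θ / c s)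
    (Z : Fin S → Type*) [∀ s, MeasurableSpace (Z s)]
    (ν : ∀ s, Measure (Z s)) [∀ s, SigmaFinite (ν s)]
    (k : ∀ s, Θ → Z s → ℝ≥0∞) (hk : ∀ s, Measurable (Function.uncurry (k s)))
    (hLk : ∀ s θ, L s θ = ∫⁻ z, k s θ z ∂ν s)
    (d : ∀ s, Z s → ℝ≥0∞) (hd : ∀ s z, d s z = ∫⁻ θ, k s θ z * πsub θ ∂μ)
    (hdae : ∀ s, ∀ᵐ z ∂ν s, d s z ≠ 0 ∧ d s z ≠ ⊤)
    (qz : ∀ s, Z s → Θ → ℝ≥0∞)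
    (hqz : ∀ s z θ, qz s z θ =
      if d s z = 0 ∨ d s z = ⊤ then 0 else k s θ z * πsub θ / d s z)
    (r : ∀ s, Z s → ℝ≥0∞) (hr : ∀ s z, r s z = d s z / c s) :
    ∫⁻ θ, ∏ s, q s θ ∂μ =
      ∫⁻ z : ∀ s, Z s, (∫⁻ θ, ∏ s, qz s (z s) θ ∂μ) * ∏ s, r s (z s) ∂Measure.pi ν :=
  subposterior_integral_latent_general μ S π hπ L α πsub hπsub c hc0 q hq Z ν k hk hLk d hdae qz hqz
    r hr
end

section
/- With the latent-variable setup below, for every z = (z_1,…,z_S) ∈ Z_1×⋯×Z_S such that 0 < d_s(z_s) < ∞ for all s, the integrated product of the conditional subposteriors equals the subposterior integral times the importance ratio of the joint latent posterior to the product of the latent subposteriors: ∫_Θ ∏_{s=1}^S q_s^{z_s}(θ) dμ(θ) = I_sub · P(z_1,…,z_S) / ∏_{s=1}^S r_s(z_s). -/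
/-!
The `S` copies of the subprior `π̃ = π ^ (1/S) / α` multiply back to `π / α ^ S`. Hence
`∫ ∏ q_s^{z_s} = (∫ (∏ k_s(·, z_s)) π) / (α ^ S ∏ d_s(z_s))` and `I_sub = p(y) / (α ^ S ∏ c_s)`;
in the importance ratio `p(y)` and `α ^ S` cancel, and `∏ d_s(z_s) / ∏ c_s = ∏ r_s(z_s)`.
-/

open MeasureTheory ENNReal

namespace ENNReal

lemma rpow_inv_natCast_div_pow {n : ℕ} (hn : n ≠ 0) (x a : ℝ≥0∞) :
    (x ^ (n⁻¹ : ℝ) / a) ^ n = x / a ^ n := by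
  rw [div_eq_mul_inv, mul_pow, rpow_inv_natCast_pow hn, ← ENNReal.inv_pow, div_eq_mul_inv]

lemma prod_mul_rpow_div_div {S : ℕ} (hS : S ≠ 0) (f : Fin S → ℝ≥0∞) (x : ℝ≥0∞) {a : ℝ≥0∞}
    (ha : a ≠ 0) (C : Fin S → ℝ≥0∞) (hC : ∀ s, C s ≠ 0) :
    ∏ s, f s * (x ^ (1 / (S : ℝ)) / a) / C s = (∏ s, f s) * x / (a ^ S * ∏ s, C s) := by
  have hCprod : ∏ s, C s ≠ 0 := Finset.prod_ne_zero_iff.2 fun s _ => hC s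
  rw [prod_div_distrib_of_ne_zero fun s _ => hC s, Finset.prod_mul_distrib, Finset.prod_const,
    Finset.card_univ, Fintype.card_fin, one_div, rpow_inv_natCast_div_pow hS,
    div_eq_mul_inv, div_eq_mul_inv, div_eq_mul_inv,
    ENNReal.mul_inv (Or.inl (pow_ne_zero S ha)) (Or.inr hCprod)]
  ring

lemma div_mul_div_div_div_cancel {a b c x y : ℝ≥0∞} (ha0 : a ≠ 0) (hatop : a ≠ ⊤)
    (hc0 : c ≠ 0) (hctop : c ≠ ⊤) (hy0 : y ≠ 0) (hytop : y ≠ ⊤) :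
    a / (b * c) * (x / a) / (y / c) = x / (b * y) := by
  simp only [div_eq_mul_inv]
  rw [ENNReal.mul_inv (Or.inr hctop) (Or.inr hc0), ENNReal.mul_inv (Or.inr hytop) (Or.inr hy0),
    ENNReal.mul_inv (Or.inl hy0) (Or.inl hytop), inv_inv]
  calc a * (b⁻¹ * c⁻¹) * (x * a⁻¹) * (y⁻¹ * c)
      = x * (b⁻¹ * y⁻¹) * (a * a⁻¹) * (c⁻¹ * c) := by ring
    _ = x * (b⁻¹ * y⁻¹) := by
      rw [ENNReal.mul_inv_cancel ha0 hatop, ENNReal.inv_mul_cancel hc0 hctop, mul_one, mul_one]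

end ENNReal

theorem MeasureTheory.lintegral_prod_mul_rpow_div_div {Θ : Type*} [MeasurableSpace Θ]
    (μ : Measure Θ) {S : ℕ} (hS : S ≠ 0) (f : Fin S → Θ → ℝ≥0∞) (π : Θ → ℝ≥0∞) {a : ℝ≥0∞}
    (ha : a ≠ 0) (C : Fin S → ℝ≥0∞) (hC : ∀ s, C s ≠ 0) :
    ∫⁻ θ, ∏ s, f s θ * (π θ ^ (1 / (S : ℝ)) / a) / C s ∂μ
      = (∫⁻ θ, (∏ s, f s θ) * π θ ∂μ) / (a ^ S * ∏ s, C s) := by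
  have hden : a ^ S * ∏ s, C s ≠ 0 :=
    mul_ne_zero (pow_ne_zero S ha) (Finset.prod_ne_zero_iff.2 fun s _ => hC s)
  simp_rw [ENNReal.prod_mul_rpow_div_div hS _ _ ha C hC, div_eq_mul_inv]
  exact lintegral_mul_const' _ _ (ENNReal.inv_ne_top.2 hden)

theorem conditional_subposterior_importance_ratio_general
    {Θ : Type*} [MeasurableSpace Θ] (μ : Measure Θ)
    (S : ℕ) (hS : 1 ≤ S)
    (π : Θ → ℝ≥0∞)
    (L : Fin S → Θ → ℝ≥0∞)
    (α : ℝ≥0∞)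
    (hα0 : α ≠ 0)
    (πsub : Θ → ℝ≥0∞) (hπsub : ∀ θ, πsub θ = π θ ^ (1 / (S : ℝ)) / α)
    (c : Fin S → ℝ≥0∞)
    (hc0 : ∀ s, c s ≠ 0) (hctop : ∀ s, c s ≠ ⊤)
    (q : Fin S → Θ → ℝ≥0∞) (hq : ∀ s θ, q s θ = L s θ * πsub θ / c s)
    (Z : Fin S → Type*)
    (k : ∀ s, Θ → Z s → ℝ≥0∞)
    (d : ∀ s, Z s → ℝ≥0∞)
    (qz : ∀ s, Z s → Θ → ℝ≥0∞)
    (hqz : ∀ s z θ, qz s z θ = k s θ z * πsub θ / d s z)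
    (r : ∀ s, Z s → ℝ≥0∞) (hr : ∀ s z, r s z = d s z / c s)
    (py : ℝ≥0∞) (hpy : py = ∫⁻ θ, (∏ s, L s θ) * π θ ∂μ)
    (hpy0 : py ≠ 0) (hpytop : py ≠ ⊤)
    (Isub : ℝ≥0∞) (hIsub : Isub = ∫⁻ θ, ∏ s, q s θ ∂μ)
    (P : (∀ s, Z s) → ℝ≥0∞)
    (hP : ∀ z : ∀ s, Z s, P z = (∫⁻ θ, (∏ s, k s θ (z s)) * π θ ∂μ) / py)
    (z : ∀ s, Z s) (hz : ∀ s, d s (z s) ≠ 0 ∧ d s (z s) ≠ ⊤) :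
    ∫⁻ θ, ∏ s, qz s (z s) θ ∂μ = Isub * P z / ∏ s, r s (z s) := by
  have hS0 : S ≠ 0 := by omega
  have hlhs : ∫⁻ θ, ∏ s, qz s (z s) θ ∂μ
      = (∫⁻ θ, (∏ s, k s θ (z s)) * π θ ∂μ) / (α ^ S * ∏ s, d s (z s)) := by
    simp_rw [hqz, hπsub]
    exact lintegral_prod_mul_rpow_div_div μ hS0 _ π hα0 _ fun s => (hz s).1
  have hIsub_eq : Isub = py / (α ^ S * ∏ s, c s) := by
    rw [hIsub, hpy]
    simp_rw [hq, hπsub]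
    exact lintegral_prod_mul_rpow_div_div μ hS0 L π hα0 c hc0
  have hr_prod : ∏ s, r s (z s) = (∏ s, d s (z s)) / ∏ s, c s := by
    simp_rw [hr]
    exact prod_div_distrib_of_ne_zero fun s _ => hc0 s
  rw [hlhs, hIsub_eq, hP z, hr_prod]
  exact (div_mul_div_div_div_cancel hpy0 hpytop
    (Finset.prod_ne_zero_iff.2 fun s _ => hc0 s) (prod_ne_top fun s _ => hctop s)
    (Finset.prod_ne_zero_iff.2 fun s _ => (hz s).1) (prod_ne_top fun s _ => (hz s).2)).symm

/-- The integrated product of the conditional subposteriors equals the subposterior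
integral times the importance ratio of the joint latent posterior to the product of
the latent subposteriors. -/
theorem conditional_subposterior_importance_ratio
    {Θ : Type*} [MeasurableSpace Θ] (μ : Measure Θ) [SigmaFinite μ]
    (S : ℕ) (hS : 1 ≤ S)
    (π : Θ → ℝ≥0∞) (hπ : Measurable π) (hπ1 : ∫⁻ θ, π θ ∂μ = 1)
    (L : Fin S → Θ → ℝ≥0∞) (hL : ∀ s, Measurable (L s))
    (α : ℝ≥0∞) (hα : α = ∫⁻ θ, π θ ^ (1 / (S : ℝ)) ∂μ)
    (hα0 : α ≠ 0) (hαtop : α ≠ ⊤)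
    (πsub : Θ → ℝ≥0∞) (hπsub : ∀ θ, πsub θ = π θ ^ (1 / (S : ℝ)) / α)
    (c : Fin S → ℝ≥0∞) (hc : ∀ s, c s = ∫⁻ θ, L s θ * πsub θ ∂μ)
    (hc0 : ∀ s, c s ≠ 0) (hctop : ∀ s, c s ≠ ⊤)
    (q : Fin S → Θ → ℝ≥0∞) (hq : ∀ s θ, q s θ = L s θ * πsub θ / c s)
    (Z : Fin S → Type*) [∀ s, MeasurableSpace (Z s)]
    (ν : ∀ s, Measure (Z s)) [∀ s, SigmaFinite (ν s)]
    (k : ∀ s, Θ → Z s → ℝ≥0∞) (hk : ∀ s, Measurable (Function.uncurry (k s)))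
    (hLk : ∀ s θ, L s θ = ∫⁻ z, k s θ z ∂ν s)
    (d : ∀ s, Z s → ℝ≥0∞) (hd : ∀ s z, d s z = ∫⁻ θ, k s θ z * πsub θ ∂μ)
    (qz : ∀ s, Z s → Θ → ℝ≥0∞)
    (hqz : ∀ s z θ, qz s z θ = k s θ z * πsub θ / d s z)
    (r : ∀ s, Z s → ℝ≥0∞) (hr : ∀ s z, r s z = d s z / c s)
    (py : ℝ≥0∞) (hpy : py = ∫⁻ θ, (∏ s, L s θ) * π θ ∂μ)
    (hpy0 : py ≠ 0) (hpytop : py ≠ ⊤)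
    (Isub : ℝ≥0∞) (hIsub : Isub = ∫⁻ θ, ∏ s, q s θ ∂μ)
    (P : (∀ s, Z s) → ℝ≥0∞)
    (hP : ∀ z : ∀ s, Z s, P z = (∫⁻ θ, (∏ s, k s θ (z s)) * π θ ∂μ) / py)
    (z : ∀ s, Z s) (hz : ∀ s, d s (z s) ≠ 0 ∧ d s (z s) ≠ ⊤) :
    ∫⁻ θ, ∏ s, qz s (z s) θ ∂μ = Isub * P z / ∏ s, r s (z s) :=
  conditional_subposterior_importance_ratio_general μ S hS π L α hα0 πsub hπsub c hc0 hctop q hq Z k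
    d qz hqz r hr py hpy hpy0 hpytop Isub hIsub P hP z hz
end

section
/- Let (Θ, 𝒜, μ) be a σ-finite measure space, S ≥ 1, A ≥ 0 and ε_1,…,ε_S ≥ 0, and for s = 1,…,S let p_s, q_s : Θ → [0,∞) be measurable with ∫_Θ p_s dμ = ∫_Θ q_s dμ = 1, p_s(θ) ≤ A and q_s(θ) ≤ A for all θ, and ∫_Θ |p_s − q_s| dμ ≤ ε_s. Then |∫_Θ ∏_{s=1}^S p_s dμ − ∫_Θ ∏_{s=1}^S q_s dμ| ≤ A^{S−1} ∑_{s=1}^S ε_s. (Deterministic core of Proposition 4: if each subposterior is uniformly bounded by A, has a normal approximation uniformly bounded by A, and is within L¹-distance ε_s of its normal approximation, then the error in the integrated product of subposteriors is at most A^{S−1} ∑_s ε_s.) -/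
/-!
Pointwise, a difference of two products of factors in `[0, A]` telescopes: changing one factor
at a time, each change `|p_s - q_s|` is multiplied by `S - 1` factors bounded by `A`. Integrating
this bound gives the claim; the products are integrable, being bounded functions times one
integrable density.
-/

open MeasureTheory Finset

lemma Finset.abs_prod_sub_prod_le {ι R : Type*}
    [CommRing R] [LinearOrder R] [IsStrictOrderedRing R]
    (s : Finset ι) {f g : ι → R} {A : R} (hA : 0 ≤ A)
    (hf0 : ∀ i ∈ s, 0 ≤ f i) (hg0 : ∀ i ∈ s, 0 ≤ g i)
    (hfA : ∀ i ∈ s, f i ≤ A) (hgA : ∀ i ∈ s, g i ≤ A) :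
    |∏ i ∈ s, f i - ∏ i ∈ s, g i| ≤ A ^ (#s - 1) * ∑ i ∈ s, |f i - g i| := by
  rcases s.eq_empty_or_nonempty with rfl | hs
  · simp
  induction hs using Finset.Nonempty.cons_induction with
  | singleton a => simp
  | cons a s ha hs ih =>
    simp only [forall_mem_cons] at hf0 hg0 hfA hgA
    have hprod_f : ∏ i ∈ s, f i ≤ A ^ #s := (prod_le_prod hf0.2 hfA.2).trans_eq (prod_const A)
    have hpow : A * A ^ (#s - 1) = A ^ #s := by rw [← pow_succ', Nat.sub_add_cancel hs.card_pos]
    calc |∏ i ∈ cons a s ha, f i - ∏ i ∈ cons a s ha, g i|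
        = |(f a - g a) * ∏ i ∈ s, f i + g a * (∏ i ∈ s, f i - ∏ i ∈ s, g i)| := by
          rw [prod_cons, prod_cons]; congr 1; ring
      _ ≤ |f a - g a| * ∏ i ∈ s, f i + g a * |∏ i ∈ s, f i - ∏ i ∈ s, g i| := by
          refine (abs_add_le _ _).trans_eq ?_
          rw [abs_mul, abs_mul, abs_of_nonneg (prod_nonneg hf0.2), abs_of_nonneg hg0.1]
      _ ≤ |f a - g a| * A ^ #s + A * (A ^ (#s - 1) * ∑ i ∈ s, |f i - g i|) := by
          gcongr
          · exact hgA.1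
          · exact ih hf0.2 hg0.2 hfA.2 hgA.2
      _ = A ^ #s * (|f a - g a| + ∑ i ∈ s, |f i - g i|) := by rw [← hpow]; ring
      _ = A ^ (#(cons a s ha) - 1) * ∑ i ∈ cons a s ha, |f i - g i| := by
          rw [card_cons, Nat.add_sub_cancel, sum_cons]

lemma MeasureTheory.integrable_finset_prod_of_bounded {α ι 𝕜 : Type*} [MeasurableSpace α]
    [NormedCommRing 𝕜] {μ : Measure α} {s : Finset ι} (hs : s.Nonempty) {f : ι → α → 𝕜} {C : ℝ}
    (hf : ∀ i ∈ s, Integrable (f i) μ) (hC : ∀ i ∈ s, ∀ᵐ x ∂μ, ‖f i x‖ ≤ C) :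
    Integrable (fun x ↦ ∏ i ∈ s, f i x) μ := by
  induction hs using Finset.Nonempty.cons_induction with
  | singleton a => simpa using hf a (mem_singleton_self a)
  | cons a s ha hs ih =>
    simp only [forall_mem_cons] at hf hC
    simp only [prod_cons]
    exact (ih hf.2 hC.2).bdd_mul hf.1.aestronglyMeasurable hC.1

theorem abs_integral_prod_densities_le_general
    {Θ : Type*} [MeasurableSpace Θ] (μ : Measure Θ)
    (S : ℕ) (hS : 1 ≤ S) (A : ℝ) (hA : 0 ≤ A)
    (ε : Fin S → ℝ)
    (p q : Fin S → Θ → ℝ)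
    (hp0 : ∀ s θ, 0 ≤ p s θ) (hq0 : ∀ s θ, 0 ≤ q s θ)
    (hpA : ∀ s θ, p s θ ≤ A) (hqA : ∀ s θ, q s θ ≤ A)
    (hp1 : ∀ s, ∫ θ, p s θ ∂μ = 1) (hq1 : ∀ s, ∫ θ, q s θ ∂μ = 1)
    (hL1 : ∀ s, ∫ θ, |p s θ - q s θ| ∂μ ≤ ε s) :
    |(∫ θ, ∏ s, p s θ ∂μ) - ∫ θ, ∏ s, q s θ ∂μ| ≤ A ^ (S - 1) * ∑ s, ε s := by
  have hp := fun s ↦ integrable_of_integral_eq_one (hp1 s)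
  have hq := fun s ↦ integrable_of_integral_eq_one (hq1 s)
  have huniv : (univ : Finset (Fin S)).Nonempty := ⟨⟨0, hS⟩, mem_univ _⟩
  have hP : Integrable (fun θ ↦ ∏ s, p s θ) μ :=
    integrable_finset_prod_of_bounded huniv (fun s _ ↦ hp s) (C := A) fun s _ ↦
      .of_forall fun θ ↦ (Real.norm_of_nonneg (hp0 s θ)).trans_le (hpA s θ)
  have hQ : Integrable (fun θ ↦ ∏ s, q s θ) μ :=
    integrable_finset_prod_of_bounded huniv (fun s _ ↦ hq s) (C := A) fun s _ ↦
      .of_forall fun θ ↦ (Real.norm_of_nonneg (hq0 s θ)).trans_le (hqA s θ)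
  have hdiff s : Integrable (fun θ ↦ |p s θ - q s θ|) μ := ((hp s).sub (hq s)).abs
  calc |(∫ θ, ∏ s, p s θ ∂μ) - ∫ θ, ∏ s, q s θ ∂μ|
      = |∫ θ, (∏ s, p s θ - ∏ s, q s θ) ∂μ| := by rw [integral_sub hP hQ]
    _ ≤ ∫ θ, |∏ s, p s θ - ∏ s, q s θ| ∂μ := abs_integral_le_integral_abs
    _ ≤ ∫ θ, A ^ (S - 1) * ∑ s, |p s θ - q s θ| ∂μ := by
        refine integral_mono (hP.sub hQ).abs
          ((integrable_finsetSum _ fun s _ ↦ hdiff s).const_mul _) fun θ ↦ ?_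
        simpa using abs_prod_sub_prod_le univ hA (fun s _ ↦ hp0 s θ) (fun s _ ↦ hq0 s θ)
          (fun s _ ↦ hpA s θ) (fun s _ ↦ hqA s θ)
    _ = A ^ (S - 1) * ∑ s, ∫ θ, |p s θ - q s θ| ∂μ := by
        rw [integral_const_mul, integral_finsetSum _ fun s _ ↦ hdiff s]
    _ ≤ A ^ (S - 1) * ∑ s, ε s := by gcongr with s; exact hL1 s

/-- Deterministic core of Proposition 4: if each density is uniformly bounded by `A`
and within `L¹`-distance `ε_s` of its approximation, then the error in the integrated
product is at most `A^(S-1) ∑_s ε_s`. -/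
theorem abs_integral_prod_densities_le
    {Θ : Type*} [MeasurableSpace Θ] (μ : Measure Θ) [SigmaFinite μ]
    (S : ℕ) (hS : 1 ≤ S) (A : ℝ) (hA : 0 ≤ A)
    (ε : Fin S → ℝ) (hε : ∀ s, 0 ≤ ε s)
    (p q : Fin S → Θ → ℝ)
    (hpm : ∀ s, Measurable (p s)) (hqm : ∀ s, Measurable (q s))
    (hp0 : ∀ s θ, 0 ≤ p s θ) (hq0 : ∀ s θ, 0 ≤ q s θ)
    (hpA : ∀ s θ, p s θ ≤ A) (hqA : ∀ s θ, q s θ ≤ A)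
    (hp1 : ∀ s, ∫ θ, p s θ ∂μ = 1) (hq1 : ∀ s, ∫ θ, q s θ ∂μ = 1)
    (hL1 : ∀ s, ∫ θ, |p s θ - q s θ| ∂μ ≤ ε s) :
    |(∫ θ, ∏ s, p s θ ∂μ) - ∫ θ, ∏ s, q s θ ∂μ| ≤ A ^ (S - 1) * ∑ s, ε s :=
  abs_integral_prod_densities_le_general μ S hS A hA ε p q hp0 hq0 hpA hqA hp1 hq1 hL1
end

section
/- With the two-model divide-and-conquer setup below, the Bayes factor of model 1 over model 2 decomposes as a product of per-shard posterior-odds corrections times the ratio of the recombination terms: p_1(y)/p_2(y) = ( ∏_{s=1}^S [ π_s(1)·w_2 ] / [ π_s(2)·w_1 ] ) · ( α_1^S · I_1 ) / ( α_2^S · I_2 ), where I_i = ∫_Θ ∏_{s=1}^S q_s^{(i)}(θ) dμ(θ). -/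
/-!
Each subposterior carries the factor `π ^ (1 / S) / α`, so the product of the `S` subposteriors
of a model is `(∏ L) π / (α ^ S ∏ c)`: its integral, the recombination term, is the evidence
divided by `α ^ S ∏ c`. On the other hand, on every shard the posterior odds divided by the
prior odds is `c⁽¹⁾ / c⁽²⁾`, so the products of the normalising constants cancel.
-/

open MeasureTheory ENNReal Finset

namespace ENNReal

lemma div_div_div_cancel_right {a b c : ℝ≥0∞} (hc₀ : c ≠ 0) (hc : c ≠ ∞) :
    a / c / (b / c) = a / b := by
  simpa only [div_eq_mul_inv a, div_eq_mul_inv b] using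
    ENNReal.mul_div_mul_right a b (ENNReal.inv_ne_zero.2 hc) (ENNReal.inv_ne_top.2 hc₀)

lemma posterior_odds_div_prior_odds {a b w₁ w₂ : ℝ≥0∞} (ha₀ : a ≠ 0) (ha : a ≠ ∞)
    (hb : b ≠ ∞) (hw₁₀ : w₁ ≠ 0) (hw₁ : w₁ ≠ ∞) (hw₂₀ : w₂ ≠ 0) (hw₂ : w₂ ≠ ∞) :
    a * w₁ / (a * w₁ + b * w₂) * w₂ / (b * w₂ / (a * w₁ + b * w₂) * w₁) = a / b := by
  have hZ₀ : a * w₁ + b * w₂ ≠ 0 := by simp [ha₀, hw₁₀]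
  have hZ : a * w₁ + b * w₂ ≠ ∞ := by finiteness
  rw [← ENNReal.mul_div_right_comm, ← ENNReal.mul_div_right_comm,
    div_div_div_cancel_right hZ₀ hZ, mul_assoc, mul_right_comm b, mul_assoc b]
  exact ENNReal.mul_div_mul_right a b (mul_ne_zero hw₁₀ hw₂₀) (mul_ne_top hw₁ hw₂)

lemma div_mul_div_div_div_cancel_s13 {a b c d : ℝ≥0∞} (hc₀ : c ≠ 0) (hc : c ≠ ∞)
    (hd₀ : d ≠ 0) (hd : d ≠ ∞) : c / d * (a / c) / (b / d) = a / b := by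
  rw [mul_comm, ← mul_div_assoc, ENNReal.div_mul_cancel hc₀ hc, div_div_div_cancel_right hd₀ hd]

end ENNReal

section Recombination

variable {ι : Type*} [Fintype ι] [Nonempty ι]

lemma prod_subposterior_eq {x α : ℝ≥0∞} {l c : ι → ℝ≥0∞} (hα₀ : α ≠ 0) (hc₀ : ∀ i, c i ≠ 0) :
    ∏ i, l i * (x ^ (1 / (Fintype.card ι : ℝ)) / α) / c i
      = (∏ i, l i) * x / (α ^ Fintype.card ι * ∏ i, c i) := by
  rw [prod_div_distrib_of_ne_zero fun i _ => hc₀ i, prod_mul_distrib, prod_const, card_univ,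
    div_eq_mul_inv (x ^ _), mul_pow, ← ENNReal.inv_pow, one_div,
    ENNReal.rpow_inv_natCast_pow Fintype.card_ne_zero]
  simp only [div_eq_mul_inv]
  rw [ENNReal.mul_inv (.inl (pow_ne_zero _ hα₀)) (.inr (prod_ne_zero_iff.2 fun i _ => hc₀ i))]
  ring

lemma pow_card_mul_lintegral_prod_subposterior {Θ : Type*} [MeasurableSpace Θ] (μ : Measure Θ)
    {π : Θ → ℝ≥0∞} {L : ι → Θ → ℝ≥0∞} {α : ℝ≥0∞} {c : ι → ℝ≥0∞} (hα₀ : α ≠ 0) (hα : α ≠ ∞)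
    (hc₀ : ∀ i, c i ≠ 0) :
    α ^ Fintype.card ι * ∫⁻ θ, ∏ i, L i θ * (π θ ^ (1 / (Fintype.card ι : ℝ)) / α) / c i ∂μ
      = (∫⁻ θ, (∏ i, L i θ) * π θ ∂μ) / ∏ i, c i := by
  have hZ₀ : α ^ Fintype.card ι * ∏ i, c i ≠ 0 :=
    mul_ne_zero (pow_ne_zero _ hα₀) (prod_ne_zero_iff.2 fun i _ => hc₀ i)
  simp only [prod_subposterior_eq hα₀ hc₀, div_eq_mul_inv _ (α ^ _ * _)]
  rw [lintegral_mul_const' _ _ (inv_ne_top.2 hZ₀), ← div_eq_mul_inv, ← mul_div_assoc,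
    ENNReal.mul_div_mul_left _ _ (pow_ne_zero _ hα₀) (pow_ne_top hα)]

end Recombination

theorem distributed_bayes_factor_decomposition_general
    {Θ : Type*} [MeasurableSpace Θ] (μ : Measure Θ)
    (S : ℕ) (hS : 1 ≤ S)
    -- model 1
    (π₁ : Θ → ℝ≥0∞)
    (L₁ : Fin S → Θ → ℝ≥0∞)
    (α₁ : ℝ≥0∞)
    (hα₁0 : α₁ ≠ 0) (hα₁top : α₁ ≠ ⊤)
    (πsub₁ : Θ → ℝ≥0∞) (hπsub₁ : ∀ θ, πsub₁ θ = π₁ θ ^ (1 / (S : ℝ)) / α₁)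
    (c₁ : Fin S → ℝ≥0∞)
    (hc₁0 : ∀ s, c₁ s ≠ 0) (hc₁top : ∀ s, c₁ s ≠ ⊤)
    (q₁ : Fin S → Θ → ℝ≥0∞) (hq₁ : ∀ s θ, q₁ s θ = L₁ s θ * πsub₁ θ / c₁ s)
    (py₁ : ℝ≥0∞) (hpy₁ : py₁ = ∫⁻ θ, (∏ s, L₁ s θ) * π₁ θ ∂μ)
    (I₁ : ℝ≥0∞) (hI₁ : I₁ = ∫⁻ θ, ∏ s, q₁ s θ ∂μ)
    -- model 2
    (π₂ : Θ → ℝ≥0∞)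
    (L₂ : Fin S → Θ → ℝ≥0∞)
    (α₂ : ℝ≥0∞)
    (hα₂0 : α₂ ≠ 0) (hα₂top : α₂ ≠ ⊤)
    (πsub₂ : Θ → ℝ≥0∞) (hπsub₂ : ∀ θ, πsub₂ θ = π₂ θ ^ (1 / (S : ℝ)) / α₂)
    (c₂ : Fin S → ℝ≥0∞)
    (hc₂0 : ∀ s, c₂ s ≠ 0) (hc₂top : ∀ s, c₂ s ≠ ⊤)
    (q₂ : Fin S → Θ → ℝ≥0∞) (hq₂ : ∀ s θ, q₂ s θ = L₂ s θ * πsub₂ θ / c₂ s)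
    (py₂ : ℝ≥0∞) (hpy₂ : py₂ = ∫⁻ θ, (∏ s, L₂ s θ) * π₂ θ ∂μ)
    (I₂ : ℝ≥0∞) (hI₂ : I₂ = ∫⁻ θ, ∏ s, q₂ s θ ∂μ)
    -- prior model probabilities and per-shard subposterior model probabilities
    (w₁ w₂ : ℝ≥0∞) (hw₁ : w₁ ≠ 0) (hw₂ : w₂ ≠ 0) (hw : w₁ + w₂ = 1)
    (πm₁ πm₂ : Fin S → ℝ≥0∞)
    (hπm₁ : ∀ s, πm₁ s = c₁ s * w₁ / (c₁ s * w₁ + c₂ s * w₂))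
    (hπm₂ : ∀ s, πm₂ s = c₂ s * w₂ / (c₁ s * w₁ + c₂ s * w₂)) :
    py₁ / py₂ =
      (∏ s, πm₁ s * w₂ / (πm₂ s * w₁)) * (α₁ ^ S * I₁) / (α₂ ^ S * I₂) := by
  have : NeZero S := ⟨by omega⟩
  have hw₁top : w₁ ≠ ⊤ := ne_top_of_le_ne_top one_ne_top (hw ▸ le_self_add)
  have hw₂top : w₂ ≠ ⊤ := ne_top_of_le_ne_top one_ne_top (hw ▸ le_add_self)
  have hodds : ∏ s, πm₁ s * w₂ / (πm₂ s * w₁) = (∏ s, c₁ s) / ∏ s, c₂ s := by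
    rw [← prod_div_distrib_of_ne_zero fun s _ => hc₂0 s]
    refine prod_congr rfl fun s _ => ?_
    rw [hπm₁, hπm₂]
    exact posterior_odds_div_prior_odds (hc₁0 s) (hc₁top s) (hc₂top s) hw₁ hw₁top hw₂ hw₂top
  have hrec₁ : α₁ ^ S * I₁ = py₁ / ∏ s, c₁ s := by
    have := pow_card_mul_lintegral_prod_subposterior μ (π := π₁) (L := L₁) hα₁0 hα₁top hc₁0
    simp only [Fintype.card_fin] at this
    simp only [hI₁, hq₁, hπsub₁, hpy₁, this]
  have hrec₂ : α₂ ^ S * I₂ = py₂ / ∏ s, c₂ s := by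
    have := pow_card_mul_lintegral_prod_subposterior μ (π := π₂) (L := L₂) hα₂0 hα₂top hc₂0
    simp only [Fintype.card_fin] at this
    simp only [hI₂, hq₂, hπsub₂, hpy₂, this]
  rw [hodds, hrec₁, hrec₂, div_mul_div_div_div_cancel_s13
    (prod_ne_zero_iff.2 fun s _ => hc₁0 s) (prod_ne_top fun s _ => hc₁top s)
    (prod_ne_zero_iff.2 fun s _ => hc₂0 s) (prod_ne_top fun s _ => hc₂top s)]

/-- Distributed reversible-jump decomposition of the Bayes factor: the Bayes factor of
model 1 over model 2 decomposes as a product of per-shard posterior-odds corrections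
times the ratio of the recombination terms. -/
theorem distributed_bayes_factor_decomposition
    {Θ : Type*} [MeasurableSpace Θ] (μ : Measure Θ) [SigmaFinite μ]
    (S : ℕ) (hS : 1 ≤ S)
    -- model 1
    (π₁ : Θ → ℝ≥0∞) (hπ₁ : Measurable π₁) (hπ₁1 : ∫⁻ θ, π₁ θ ∂μ = 1)
    (L₁ : Fin S → Θ → ℝ≥0∞) (hL₁ : ∀ s, Measurable (L₁ s))
    (α₁ : ℝ≥0∞) (hα₁ : α₁ = ∫⁻ θ, π₁ θ ^ (1 / (S : ℝ)) ∂μ)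
    (hα₁0 : α₁ ≠ 0) (hα₁top : α₁ ≠ ⊤)
    (πsub₁ : Θ → ℝ≥0∞) (hπsub₁ : ∀ θ, πsub₁ θ = π₁ θ ^ (1 / (S : ℝ)) / α₁)
    (c₁ : Fin S → ℝ≥0∞) (hc₁ : ∀ s, c₁ s = ∫⁻ θ, L₁ s θ * πsub₁ θ ∂μ)
    (hc₁0 : ∀ s, c₁ s ≠ 0) (hc₁top : ∀ s, c₁ s ≠ ⊤)
    (q₁ : Fin S → Θ → ℝ≥0∞) (hq₁ : ∀ s θ, q₁ s θ = L₁ s θ * πsub₁ θ / c₁ s)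
    (py₁ : ℝ≥0∞) (hpy₁ : py₁ = ∫⁻ θ, (∏ s, L₁ s θ) * π₁ θ ∂μ)
    (I₁ : ℝ≥0∞) (hI₁ : I₁ = ∫⁻ θ, ∏ s, q₁ s θ ∂μ)
    -- model 2
    (π₂ : Θ → ℝ≥0∞) (hπ₂ : Measurable π₂) (hπ₂1 : ∫⁻ θ, π₂ θ ∂μ = 1)
    (L₂ : Fin S → Θ → ℝ≥0∞) (hL₂ : ∀ s, Measurable (L₂ s))
    (α₂ : ℝ≥0∞) (hα₂ : α₂ = ∫⁻ θ, π₂ θ ^ (1 / (S : ℝ)) ∂μ)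
    (hα₂0 : α₂ ≠ 0) (hα₂top : α₂ ≠ ⊤)
    (πsub₂ : Θ → ℝ≥0∞) (hπsub₂ : ∀ θ, πsub₂ θ = π₂ θ ^ (1 / (S : ℝ)) / α₂)
    (c₂ : Fin S → ℝ≥0∞) (hc₂ : ∀ s, c₂ s = ∫⁻ θ, L₂ s θ * πsub₂ θ ∂μ)
    (hc₂0 : ∀ s, c₂ s ≠ 0) (hc₂top : ∀ s, c₂ s ≠ ⊤)
    (q₂ : Fin S → Θ → ℝ≥0∞) (hq₂ : ∀ s θ, q₂ s θ = L₂ s θ * πsub₂ θ / c₂ s)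
    (py₂ : ℝ≥0∞) (hpy₂ : py₂ = ∫⁻ θ, (∏ s, L₂ s θ) * π₂ θ ∂μ)
    (hpy₂0 : py₂ ≠ 0) (hpy₂top : py₂ ≠ ⊤)
    (I₂ : ℝ≥0∞) (hI₂ : I₂ = ∫⁻ θ, ∏ s, q₂ s θ ∂μ)
    (hI₂0 : I₂ ≠ 0) (hI₂top : I₂ ≠ ⊤)
    -- prior model probabilities and per-shard subposterior model probabilities
    (w₁ w₂ : ℝ≥0∞) (hw₁ : w₁ ≠ 0) (hw₂ : w₂ ≠ 0) (hw : w₁ + w₂ = 1)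
    (πm₁ πm₂ : Fin S → ℝ≥0∞)
    (hπm₁ : ∀ s, πm₁ s = c₁ s * w₁ / (c₁ s * w₁ + c₂ s * w₂))
    (hπm₂ : ∀ s, πm₂ s = c₂ s * w₂ / (c₁ s * w₁ + c₂ s * w₂)) :
    py₁ / py₂ =
      (∏ s, πm₁ s * w₂ / (πm₂ s * w₁)) * (α₁ ^ S * I₁) / (α₂ ^ S * I₂) :=
  distributed_bayes_factor_decomposition_general μ S hS π₁ L₁ α₁ hα₁0 hα₁top πsub₁ hπsub₁ c₁ hc₁0
    hc₁top q₁ hq₁ py₁ hpy₁ I₁ hI₁ π₂ L₂ α₂ hα₂0 hα₂top πsub₂ hπsub₂ c₂ hc₂0 hc₂top q₂ hq₂ py₂ hpy₂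
    I₂ hI₂ w₁ w₂ hw₁ hw₂ hw πm₁ πm₂ hπm₁ hπm₂
end
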